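/- arXiv:1903.00193 — 2 statements merged into one kernel-verified Lean document; each statement's English description precedes it below -/
import Mathlib

section
/- Let M,N be positive integers and let f:{0,…,M−1}×{0,…,N−1}→ℍ be a discrete quaternion signal that is not identically zero. Then N_{(t,s)} + N_{(u,v)} ≥ 2√(M·N), where N_{(t,s)} is the number of nonzero values of f and N_{(u,v)} is the number of nonzero values of its DQFT f̂. -/
open scoped BigOperators Classical
open scoped Quaternion

noncomputable def qI : Quaternion ℝ := ⟨0, 1, 0, 0⟩
noncomputable def qJ : Quaternion ℝ := ⟨0, 0, 1, 0⟩

/-- exp(θ q) = cos θ + (sin θ) q for a (unit pure) quaternion q. -/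
noncomputable def qexp (q : Quaternion ℝ) (θ : ℝ) : Quaternion ℝ :=
  ((Real.cos θ : ℝ) : Quaternion ℝ) + (Real.sin θ) • q

noncomputable def cI : ℂ →+* Quaternion ℝ where
  toFun z := ⟨z.re, z.im, 0, 0⟩
  map_one' := by ext <;> simp
  map_mul' a b := by
    erw [QuaternionAlgebra.mk_mul_mk]
    ext <;> simp [Quaternion.re_mul, Quaternion.imI_mul, Quaternion.imJ_mul,
      Quaternion.imK_mul, Complex.mul_re, Complex.mul_im] <;> ring
  map_zero' := by ext <;> simp
  map_add' a b := by erw [QuaternionAlgebra.mk_add_mk]; ext <;> simp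

noncomputable def cJ : ℂ →+* Quaternion ℝ where
  toFun z := ⟨z.re, 0, z.im, 0⟩
  map_one' := by ext <;> simp
  map_mul' a b := by
    erw [QuaternionAlgebra.mk_mul_mk]
    ext <;> simp [Quaternion.re_mul, Quaternion.imI_mul, Quaternion.imJ_mul,
      Quaternion.imK_mul, Complex.mul_re, Complex.mul_im] <;> ring
  map_zero' := by ext <;> simp
  map_add' a b := by erw [QuaternionAlgebra.mk_add_mk]; ext <;> simp

theorem qexp_qI (θ : ℝ) : qexp qI θ = cI (Complex.exp (θ * Complex.I)) := by
  rw [Complex.exp_mul_I]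
  ext <;> simp [qexp, qI, Quaternion.re_coe, Quaternion.imI_coe, Quaternion.imJ_coe,
    Quaternion.imK_coe, Complex.add_re, Complex.add_im, Complex.cos_ofReal_re, Complex.sin_ofReal_re] <;>
    erw [QuaternionAlgebra.smul_mk] <;> simp [Complex.cos_ofReal_re, Complex.sin_ofReal_re,
      show ∀ z, cI z = ⟨z.re, z.im, 0, 0⟩ from fun _ => rfl]

theorem qexp_qJ (θ : ℝ) : qexp qJ θ = cJ (Complex.exp (θ * Complex.I)) := by
  rw [Complex.exp_mul_I]
  ext <;> simp [qexp, qJ, Complex.cos_ofReal_re, Complex.sin_ofReal_re] <;>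
    erw [QuaternionAlgebra.smul_mk] <;> simp [Complex.cos_ofReal_re, Complex.sin_ofReal_re,
      show ∀ z, cJ z = ⟨z.re, 0, z.im, 0⟩ from fun _ => rfl]

theorem qexp_qI_mul (a b : ℝ) : qexp qI a * qexp qI b = qexp qI (a + b) := by
  simp only [qexp_qI, ← map_mul, ← Complex.exp_add]
  norm_num [add_mul]

theorem qexp_qJ_mul (a b : ℝ) : qexp qJ a * qexp qJ b = qexp qJ (a + b) := by
  simp only [qexp_qJ, ← map_mul, ← Complex.exp_add]
  norm_num [add_mul]

theorem complex_orth (M : ℕ) (hM : 0 < M) (t t' : Fin M) :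
    ∑ u : Fin M, Complex.exp (((2 * Real.pi * u * ((t : ℝ) - (t' : ℝ)) / M : ℝ) : ℂ) * Complex.I)
      = if t = t' then (M : ℂ) else 0 := by
  by_cases h : t = t'
  · simp [h]
  · simp only [h, if_false]
    have hd : ((t : ℤ) - (t' : ℤ)) ≠ 0 := by
      intro hc
      exact h (Fin.ext (by omega))
    set d : ℤ := (t : ℤ) - (t' : ℤ) with hdd
    set z : ℂ := Complex.exp (((2 * Real.pi * d / M : ℝ) : ℂ) * Complex.I) with hz
    have hterm : ∀ u : Fin M,
        Complex.exp (((2 * Real.pi * u * ((t : ℝ) - (t' : ℝ)) / M : ℝ) : ℂ) * Complex.I)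
          = z ^ (u : ℕ) := by
      intro u
      rw [hz, ← Complex.exp_nat_mul]
      congr 1
      simp only [hdd]
      push_cast
      ring
    have hzM : z ^ M = 1 := by
      rw [hz, ← Complex.exp_nat_mul]
      have : (M : ℂ) * (((2 * Real.pi * d / M : ℝ) : ℂ) * Complex.I) = d * (2 * Real.pi * Complex.I) := by
        have hM0 : (M : ℂ) ≠ 0 := Nat.cast_ne_zero.mpr hM.ne'
        push_cast
        field_simp
      rw [this]
      exact Complex.exp_int_mul_two_pi_mul_I d
    have hz1 : z ≠ 1 := by
      intro hc
      rw [hz, Complex.exp_eq_one_iff] at hc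
      obtain ⟨n, hn⟩ := hc
      have hIne : (Complex.I : ℂ) ≠ 0 := Complex.I_ne_zero
      have hn' : ((2 * Real.pi * d / M : ℝ) : ℂ) = (((n : ℝ) * (2 * Real.pi) : ℝ) : ℂ) := by
        apply mul_right_cancel₀ hIne
        rw [hn]; push_cast; ring
      have hr : (2 * Real.pi * d / M : ℝ) = (n : ℝ) * (2 * Real.pi) :=
        Complex.ofReal_injective hn'
      have hMne : (M : ℝ) ≠ 0 := Nat.cast_ne_zero.mpr hM.ne'
      have hpi : (0:ℝ) < 2 * Real.pi := by positivity
      have hdn : (d : ℝ) = (n : ℝ) * M := by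
        field_simp at hr
        have h2 : (2 * Real.pi) * (d:ℝ) = (2 * Real.pi) * ((n:ℝ) * M) := by rw [hr]; ring
        exact mul_left_cancel₀ hpi.ne' h2
      have hdz : d = n * M := by exact_mod_cast hdn
      have ht := t.isLt
      have ht' := t'.isLt
      have hdvd : (M:ℤ) ∣ d := ⟨n, by rw [hdz]; ring⟩
      have h1a : -(M:ℤ) < d := by rw [hdd]; omega
      have h1b : d < M := by rw [hdd]; omega
      exact hd (Int.eq_zero_of_abs_lt_dvd hdvd (abs_lt.mpr ⟨h1a, h1b⟩))
    calc ∑ u : Fin M, Complex.exp (((2 * Real.pi * u * ((t : ℝ) - (t' : ℝ)) / M : ℝ) : ℂ) * Complex.I)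
        = ∑ u : Fin M, z ^ (u : ℕ) := by exact Finset.sum_congr rfl (fun u _ => hterm u)
      _ = ∑ i ∈ Finset.range M, z ^ i := (Fin.sum_univ_eq_sum_range _ _)
      _ = (z ^ M - 1) / (z - 1) := geom_sum_eq hz1 M
      _ = 0 := by rw [hzM]; simp

theorem orth_qI (M : ℕ) (hM : 0 < M) (t t' : Fin M) :
    ∑ u : Fin M, qexp qI (2 * Real.pi * u * ((t : ℝ) - (t' : ℝ)) / M)
      = if t = t' then ((M : ℝ) : Quaternion ℝ) else 0 := by
  simp only [qexp_qI]
  rw [← map_sum, complex_orth M hM t t']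
  split <;> simp <;> norm_cast

theorem orth_qJ (N : ℕ) (hN : 0 < N) (s s' : Fin N) :
    ∑ v : Fin N, qexp qJ (2 * Real.pi * v * ((s : ℝ) - (s' : ℝ)) / N)
      = if s = s' then ((N : ℝ) : Quaternion ℝ) else 0 := by
  simp only [qexp_qJ]
  rw [← map_sum, complex_orth N hN s s']
  split <;> simp <;> norm_cast

theorem norm_qexp_qI (θ : ℝ) : ‖qexp qI θ‖ = 1 := by
  have h : Quaternion.normSq (qexp qI θ) = 1 := by
    have : qexp qI θ = ⟨Real.cos θ, Real.sin θ, 0, 0⟩ := by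
      ext <;> simp [qexp, qI] <;> erw [QuaternionAlgebra.smul_mk] <;> simp
    rw [Quaternion.normSq_def', this]
    simp [Quaternion.normSq_def']
    try nlinarith [Real.sin_sq_add_cos_sq θ]
  have := Quaternion.normSq_eq_norm_mul_self (qexp qI θ)
  nlinarith [norm_nonneg (qexp qI θ)]

theorem norm_qexp_qJ (θ : ℝ) : ‖qexp qJ θ‖ = 1 := by
  have h : Quaternion.normSq (qexp qJ θ) = 1 := by
    have : qexp qJ θ = ⟨Real.cos θ, 0, Real.sin θ, 0⟩ := by
      ext <;> simp [qexp, qJ] <;> erw [QuaternionAlgebra.smul_mk] <;> simp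
    rw [Quaternion.normSq_def', this]
    simp [Quaternion.normSq_def']
    try nlinarith [Real.sin_sq_add_cos_sq θ]
  have := Quaternion.normSq_eq_norm_mul_self (qexp qJ θ)
  nlinarith [norm_nonneg (qexp qJ θ)]

/-- Two-sided discrete quaternion Fourier transform. -/
noncomputable def dqft (M N : ℕ) (f : Fin M → Fin N → Quaternion ℝ)
    (u : Fin M) (v : Fin N) : Quaternion ℝ :=
  ((Real.sqrt (M * N))⁻¹ : ℝ) •
    ∑ t : Fin M, ∑ s : Fin N,
      qexp qI (-(2 * Real.pi * u.val * t.val / M)) * f t s *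
        qexp qJ (-(2 * Real.pi * v.val * s.val / N))

theorem term_eq (a b c d : ℝ) (x : Quaternion ℝ) :
    qexp qI a * (qexp qI b * x * qexp qJ c) * qexp qJ d
      = qexp qI (a + b) * x * qexp qJ (c + d) := by
  rw [← qexp_qI_mul, ← qexp_qJ_mul]
  simp only [mul_assoc]

theorem quad_collapse (M N : ℕ) (hM : 0 < M) (hN : 0 < N)
    (f : Fin M → Fin N → Quaternion ℝ) (t : Fin M) (s : Fin N) :
    (∑ u : Fin M, ∑ v : Fin N, ∑ t' : Fin M, ∑ s' : Fin N,
        qexp qI (2 * Real.pi * u * ((t : ℝ) - (t' : ℝ)) / M) * f t' s' *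
          qexp qJ (2 * Real.pi * v * ((s : ℝ) - (s' : ℝ)) / N))
      = ((M : ℝ) : Quaternion ℝ) * (f t s * ((N : ℝ) : Quaternion ℝ)) := by
  calc (∑ u : Fin M, ∑ v : Fin N, ∑ t' : Fin M, ∑ s' : Fin N,
        qexp qI (2 * Real.pi * u * ((t : ℝ) - (t' : ℝ)) / M) * f t' s' *
          qexp qJ (2 * Real.pi * v * ((s : ℝ) - (s' : ℝ)) / N))
      = ∑ u : Fin M, ∑ t' : Fin M, ∑ s' : Fin N, ∑ v : Fin N,
        qexp qI (2 * Real.pi * u * ((t : ℝ) - (t' : ℝ)) / M) * f t' s' *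
          qexp qJ (2 * Real.pi * v * ((s : ℝ) - (s' : ℝ)) / N) := by
        refine Finset.sum_congr rfl (fun u _ => ?_)
        rw [Finset.sum_comm]
        exact Finset.sum_congr rfl (fun t' _ => Finset.sum_comm)
    _ = ∑ u : Fin M, ∑ t' : Fin M, ∑ s' : Fin N,
        qexp qI (2 * Real.pi * u * ((t : ℝ) - (t' : ℝ)) / M) * f t' s' *
          (if s = s' then ((N : ℝ) : Quaternion ℝ) else 0) := by
        refine Finset.sum_congr rfl (fun u _ => Finset.sum_congr rfl (fun t' _ =>
          Finset.sum_congr rfl (fun s' _ => ?_)))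
        rw [← Finset.mul_sum, orth_qJ N hN s s']
    _ = ∑ u : Fin M, ∑ t' : Fin M,
        qexp qI (2 * Real.pi * u * ((t : ℝ) - (t' : ℝ)) / M) *
          (f t' s * ((N : ℝ) : Quaternion ℝ)) := by
        refine Finset.sum_congr rfl (fun u _ => Finset.sum_congr rfl (fun t' _ => ?_))
        simp only [mul_ite, mul_zero, Finset.sum_ite_eq, Finset.mem_univ, if_true, mul_assoc]
    _ = ∑ t' : Fin M, (∑ u : Fin M,
          qexp qI (2 * Real.pi * u * ((t : ℝ) - (t' : ℝ)) / M)) *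
          (f t' s * ((N : ℝ) : Quaternion ℝ)) := by
        rw [Finset.sum_comm]
        exact Finset.sum_congr rfl (fun t' _ => (Finset.sum_mul _ _ _).symm)
    _ = ∑ t' : Fin M, (if t = t' then ((M : ℝ) : Quaternion ℝ) else 0) *
          (f t' s * ((N : ℝ) : Quaternion ℝ)) := by
        exact Finset.sum_congr rfl (fun t' _ => by rw [orth_qI M hM t t'])
    _ = ((M : ℝ) : Quaternion ℝ) * (f t s * ((N : ℝ) : Quaternion ℝ)) := by
        simp only [ite_mul, zero_mul, Finset.sum_ite_eq, Finset.mem_univ, if_true]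

theorem dqft_inv (M N : ℕ) (hM : 0 < M) (hN : 0 < N)
    (f : Fin M → Fin N → Quaternion ℝ) (t : Fin M) (s : Fin N) :
    ((Real.sqrt (M * N))⁻¹ : ℝ) •
      ∑ u : Fin M, ∑ v : Fin N,
        qexp qI (2 * Real.pi * u.val * t.val / M) * dqft M N f u v *
          qexp qJ (2 * Real.pi * v.val * s.val / N) = f t s := by
  have hkey : (∑ u : Fin M, ∑ v : Fin N,
      qexp qI (2 * Real.pi * u.val * t.val / M) * dqft M N f u v *
        qexp qJ (2 * Real.pi * v.val * s.val / N))
    = ((Real.sqrt (M * N))⁻¹ : ℝ) •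
        (((M : ℝ) : Quaternion ℝ) * (f t s * ((N : ℝ) : Quaternion ℝ))) := by
    rw [← quad_collapse M N hM hN f t s, Finset.smul_sum]
    refine Finset.sum_congr rfl (fun u _ => ?_)
    rw [Finset.smul_sum]
    refine Finset.sum_congr rfl (fun v _ => ?_)
    rw [dqft, mul_smul_comm, smul_mul_assoc]
    congr 1
    rw [Finset.mul_sum, Finset.sum_mul]
    refine Finset.sum_congr rfl (fun t' _ => ?_)
    rw [Finset.mul_sum, Finset.sum_mul]
    refine Finset.sum_congr rfl (fun s' _ => ?_)
    rw [term_eq]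
    have e1 : 2 * Real.pi * (u.val : ℝ) * (t.val : ℝ) / M + -(2 * Real.pi * u.val * t'.val / M)
        = 2 * Real.pi * u * ((t : ℝ) - (t' : ℝ)) / M := by push_cast; ring
    have e2 : -(2 * Real.pi * (v.val : ℝ) * (s'.val : ℝ) / N) + 2 * Real.pi * v.val * s.val / N
        = 2 * Real.pi * v * ((s : ℝ) - (s' : ℝ)) / N := by push_cast; ring
    rw [e1, e2]
  rw [hkey, smul_smul, Quaternion.coe_mul_eq_smul, Quaternion.mul_coe_eq_smul]
  rw [smul_smul, smul_smul]
  have hMN : (0:ℝ) < (M : ℝ) * N := by positivity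
  have h1 : (Real.sqrt ((M : ℝ) * N))⁻¹ * (Real.sqrt ((M : ℝ) * N))⁻¹ * ((M : ℝ) * N) = 1 := by
    rw [← mul_inv, Real.mul_self_sqrt hMN.le]
    field_simp
  have h2 : (Real.sqrt ((M : ℝ) * N))⁻¹ * (Real.sqrt ((M : ℝ) * N))⁻¹ * ((M : ℝ) * (N : ℝ)) = 1 := h1
  rw [show (Real.sqrt ((M:ℝ) * N))⁻¹ * (Real.sqrt ((M:ℝ) * N))⁻¹ * (M : ℝ) * (N : ℝ)
      = (Real.sqrt ((M:ℝ) * N))⁻¹ * (Real.sqrt ((M:ℝ) * N))⁻¹ * ((M : ℝ) * (N : ℝ)) from by ring,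
    h2, one_smul]

theorem norm_dqft_le (M N : ℕ) (f : Fin M → Fin N → Quaternion ℝ) (u : Fin M) (v : Fin N) :
    ‖dqft M N f u v‖ ≤ (Real.sqrt (M * N))⁻¹ * ∑ t : Fin M, ∑ s : Fin N, ‖f t s‖ := by
  rw [dqft, norm_smul, Real.norm_eq_abs, abs_of_nonneg (by positivity)]
  apply mul_le_mul_of_nonneg_left _ (by positivity)
  calc ‖∑ t : Fin M, ∑ s : Fin N,
        qexp qI (-(2 * Real.pi * u.val * t.val / M)) * f t s *
          qexp qJ (-(2 * Real.pi * v.val * s.val / N))‖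
      ≤ ∑ t : Fin M, ‖∑ s : Fin N,
        qexp qI (-(2 * Real.pi * u.val * t.val / M)) * f t s *
          qexp qJ (-(2 * Real.pi * v.val * s.val / N))‖ := norm_sum_le _ _
    _ ≤ ∑ t : Fin M, ∑ s : Fin N, ‖f t s‖ := by
        refine Finset.sum_le_sum (fun t _ => ?_)
        refine le_trans (norm_sum_le _ _) (Finset.sum_le_sum (fun s _ => ?_))
        rw [norm_mul, norm_mul, norm_qexp_qI, norm_qexp_qJ, one_mul, mul_one]

theorem norm_f_le (M N : ℕ) (hM : 0 < M) (hN : 0 < N)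
    (f : Fin M → Fin N → Quaternion ℝ) (t : Fin M) (s : Fin N) :
    ‖f t s‖ ≤ (Real.sqrt (M * N))⁻¹ * ∑ u : Fin M, ∑ v : Fin N, ‖dqft M N f u v‖ := by
  rw [← dqft_inv M N hM hN f t s, norm_smul, Real.norm_eq_abs, abs_of_nonneg (by positivity)]
  apply mul_le_mul_of_nonneg_left _ (by positivity)
  refine le_trans (norm_sum_le _ _) (Finset.sum_le_sum (fun u _ => ?_))
  refine le_trans (norm_sum_le _ _) (Finset.sum_le_sum (fun v _ => ?_))
  rw [norm_mul, norm_mul, norm_qexp_qI, norm_qexp_qJ, one_mul, mul_one]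

theorem sum_norm_le_card_mul (M N : ℕ) (g : Fin M → Fin N → Quaternion ℝ) (b : ℝ)
    (hb : ∀ (t : Fin M) (s : Fin N), ‖g t s‖ ≤ b) :
    (∑ t : Fin M, ∑ s : Fin N, ‖g t s‖)
      ≤ ((Finset.univ.filter (fun p : Fin M × Fin N => g p.1 p.2 ≠ 0)).card : ℝ) * b := by
  classical
  have h1 : (∑ t : Fin M, ∑ s : Fin N, ‖g t s‖)
      = ∑ p ∈ (Finset.univ.filter (fun p : Fin M × Fin N => g p.1 p.2 ≠ 0)), ‖g p.1 p.2‖ := by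
    have h0 : (∑ p : Fin M × Fin N, ‖g p.1 p.2‖) = ∑ t : Fin M, ∑ s : Fin N, ‖g t s‖ :=
      Fintype.sum_prod_type (f := fun p : Fin M × Fin N => ‖g p.1 p.2‖)
    rw [← h0]
    rw [Finset.sum_filter_of_ne]
    intro p _ hp
    simp only [ne_eq]
    intro hc
    rw [hc] at hp
    simp at hp
  rw [h1]
  have := Finset.sum_le_card_nsmul
    (Finset.univ.filter (fun p : Fin M × Fin N => g p.1 p.2 ≠ 0))
    (fun p => ‖g p.1 p.2‖) b (fun p _ => hb p.1 p.2)
  simpa [nsmul_eq_mul] using this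

/-- Additive form: `N_{(t,s)} + N_{(u,v)} ≥ 2√(M·N)`. -/
theorem dqft_uncertainty_sum (M N : ℕ) (hM : 0 < M) (hN : 0 < N)
    (f : Fin M → Fin N → Quaternion ℝ) (hf : f ≠ 0) :
    2 * Real.sqrt (M * N) ≤
      ((Finset.univ.filter (fun p : Fin M × Fin N => f p.1 p.2 ≠ 0)).card : ℝ) +
        ((Finset.univ.filter (fun p : Fin M × Fin N => dqft M N f p.1 p.2 ≠ 0)).card : ℝ) := by
  classical
  set A : ℝ := ((Finset.univ.filter (fun p : Fin M × Fin N => f p.1 p.2 ≠ 0)).card : ℝ) with hA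
  set B : ℝ := ((Finset.univ.filter (fun p : Fin M × Fin N => dqft M N f p.1 p.2 ≠ 0)).card : ℝ)
    with hB
  have hA0 : 0 ≤ A := by positivity
  have hB0 : 0 ≤ B := by positivity
  set c : ℝ := (Real.sqrt (M * N))⁻¹ with hc
  have hMN : (0:ℝ) < (M : ℝ) * N := by positivity
  have hc2 : c * c = ((M:ℝ) * N)⁻¹ := by
    rw [hc, ← mul_inv, Real.mul_self_sqrt hMN.le]
  -- maximizer of ‖f‖
  have hne : (Finset.univ : Finset (Fin M × Fin N)).Nonempty :=
    ⟨(⟨0, hM⟩, ⟨0, hN⟩), Finset.mem_univ _⟩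
  obtain ⟨p₀, -, hp₀⟩ := Finset.exists_max_image Finset.univ
    (fun p : Fin M × Fin N => ‖f p.1 p.2‖) hne
  have hpos : 0 < ‖f p₀.1 p₀.2‖ := by
    obtain ⟨t, ht⟩ := Function.ne_iff.mp hf
    obtain ⟨s, hs⟩ := Function.ne_iff.mp ht
    have h1 : 0 < ‖f t s‖ := norm_pos_iff.mpr hs
    exact lt_of_lt_of_le h1 (hp₀ (t, s) (Finset.mem_univ _))
  -- bound on dqft values
  have hhat : ∀ (u : Fin M) (v : Fin N),
      ‖dqft M N f u v‖ ≤ c * (A * ‖f p₀.1 p₀.2‖) := by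
    intro u v
    refine le_trans (norm_dqft_le M N f u v) ?_
    apply mul_le_mul_of_nonneg_left _ (by positivity)
    exact sum_norm_le_card_mul M N f _ (fun t s => hp₀ (t, s) (Finset.mem_univ _))
  -- bound on f via inversion
  have hmain : ‖f p₀.1 p₀.2‖ ≤ c * (B * (c * (A * ‖f p₀.1 p₀.2‖))) := by
    refine le_trans (norm_f_le M N hM hN f p₀.1 p₀.2) ?_
    apply mul_le_mul_of_nonneg_left _ (by positivity)
    exact sum_norm_le_card_mul M N (dqft M N f) _ hhat
  have h1 : 1 ≤ ((M:ℝ) * N)⁻¹ * (A * B) := by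
    have h2 : ‖f p₀.1 p₀.2‖ * 1 ≤ ‖f p₀.1 p₀.2‖ * ((c * c) * (A * B)) := by
      calc ‖f p₀.1 p₀.2‖ * 1 = ‖f p₀.1 p₀.2‖ := mul_one _
        _ ≤ c * (B * (c * (A * ‖f p₀.1 p₀.2‖))) := hmain
        _ = ‖f p₀.1 p₀.2‖ * ((c * c) * (A * B)) := by ring
    have h3 : 1 ≤ c * c * (A * B) := le_of_mul_le_mul_left h2 hpos
    rwa [hc2] at h3
  have hAB : (M:ℝ) * N ≤ A * B := by
    rw [inv_mul_eq_div, le_div_iff₀ hMN] at h1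
    linarith
  have hs1 : Real.sqrt ((M:ℝ) * N) ≤ Real.sqrt (A * B) := Real.sqrt_le_sqrt hAB
  have hs2 : Real.sqrt (A * B) = Real.sqrt A * Real.sqrt B := Real.sqrt_mul hA0 B
  have hs3 : 2 * (Real.sqrt A * Real.sqrt B) ≤ A + B := by
    nlinarith [Real.sq_sqrt hA0, Real.sq_sqrt hB0, sq_nonneg (Real.sqrt A - Real.sqrt B)]
  calc 2 * Real.sqrt ((M:ℝ) * N) ≤ 2 * Real.sqrt (A * B) := by linarith
    _ = 2 * (Real.sqrt A * Real.sqrt B) := by rw [hs2]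
    _ ≤ A + B := hs3
end

section
/- Let k,l be positive integers, set N = k·l, and let f:{0,…,N−1}×{0,…,N−1}→ℍ be defined by f(t,s)=1 if k divides t and k divides s, and f(t,s)=0 otherwise. Then the DQFT (with M=N) satisfies f̂(u,v)=l/k if l divides u and l divides v, and f̂(u,v)=0 otherwise. In particular N_{(t,s)}=l², N_{(u,v)}=k², so N_{(t,s)}·N_{(u,v)}=N² and equality holds in the discrete quaternion uncertainty principle. -/
open scoped BigOperators Classical

lemma qI_mul_qI : qI * qI = -1 := by ext <;> simp only [Quaternion.re_mul, Quaternion.imI_mul, Quaternion.imJ_mul, Quaternion.imK_mul] <;> simp [qI] <;> rfl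
lemma qJ_mul_qJ : qJ * qJ = -1 := by ext <;> simp only [Quaternion.re_mul, Quaternion.imI_mul, Quaternion.imJ_mul, Quaternion.imK_mul] <;> simp [qJ] <;> rfl

/-- Algebra embedding ℂ → ℍ sending I to qI. -/
noncomputable def phiI : ℂ →ₐ[ℝ] Quaternion ℝ := Complex.liftAux qI qI_mul_qI
/-- Algebra embedding ℂ → ℍ sending I to qJ. -/
noncomputable def phiJ : ℂ →ₐ[ℝ] Quaternion ℝ := Complex.liftAux qJ qJ_mul_qJ

lemma qexp_qI_eq (θ : ℝ) : qexp qI θ = phiI (Complex.exp (θ * Complex.I)) := by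
  rw [phiI, Complex.liftAux_apply, Complex.exp_ofReal_mul_I_re, Complex.exp_ofReal_mul_I_im]
  rfl

lemma qexp_qJ_eq (θ : ℝ) : qexp qJ θ = phiJ (Complex.exp (θ * Complex.I)) := by
  rw [phiJ, Complex.liftAux_apply, Complex.exp_ofReal_mul_I_re, Complex.exp_ofReal_mul_I_im]
  rfl

/-- The complex geometric sum over `l`-th roots of unity. -/
lemma complex_root_sum (l : ℕ) (hl : 0 < l) (u : ℕ) :
    ∑ m : Fin l, Complex.exp ((-(2 * Real.pi * u * m.val / l) : ℝ) * Complex.I)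
      = if l ∣ u then (l : ℂ) else 0 := by
  have hlc : (l : ℂ) ≠ 0 := Nat.cast_ne_zero.mpr hl.ne'
  set x : ℂ := Complex.exp ((-(2 * Real.pi * u / l) : ℝ) * Complex.I) with hx
  have hterm : ∀ m : Fin l,
      Complex.exp ((-(2 * Real.pi * u * m.val / l) : ℝ) * Complex.I) = x ^ m.val := by
    intro m
    rw [hx, ← Complex.exp_nat_mul]
    congr 1
    push_cast
    ring
  rw [Fintype.sum_congr _ _ hterm]
  by_cases hdvd : l ∣ u
  · have hdvd' := hdvd
    obtain ⟨c, hc⟩ := hdvd'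
    have hx1 : x = 1 := by
      rw [hx, Complex.exp_eq_one_iff]
      refine ⟨-c, ?_⟩
      subst hc
      push_cast
      field_simp
    simp [hx1, hdvd]
  · have hx1 : x ≠ 1 := by
      intro h
      rw [hx, Complex.exp_eq_one_iff] at h
      obtain ⟨n, hn⟩ := h
      have hn' : ((-(2 * Real.pi * u / l) : ℝ) : ℂ) * Complex.I
          = (((n : ℝ) * (2 * Real.pi) : ℝ) : ℂ) * Complex.I := by
        rw [hn]; push_cast; ring
      have h3 : (-(2 * Real.pi * u / l) : ℝ) = (n : ℝ) * (2 * Real.pi) :=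
        Complex.ofReal_injective (mul_right_cancel₀ Complex.I_ne_zero hn')
      have hlr : (l : ℝ) ≠ 0 := Nat.cast_ne_zero.mpr hl.ne'
      have h4 : (2 * Real.pi) * (-(u : ℝ)) = (2 * Real.pi) * ((n : ℝ) * l) := by
        field_simp at h3
        ring_nf at h3 ⊢
        linear_combination (2 * Real.pi) * h3
      have h5 : -(u : ℝ) = (n : ℝ) * l :=
        mul_left_cancel₀ (by positivity) h4
      have h5i : (u : ℤ) = (-n) * l := by
        have : (u : ℝ) = (((-n) * l : ℤ) : ℝ) := by push_cast; linarith
        exact_mod_cast this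
      have : (l : ℤ) ∣ (u : ℤ) := h5i ▸ dvd_mul_left (l : ℤ) (-n)
      exact hdvd (by exact_mod_cast this)
    have hxl : x ^ l = 1 := by
      rw [hx, ← Complex.exp_nat_mul, Complex.exp_eq_one_iff]
      refine ⟨-u, ?_⟩
      push_cast
      field_simp
    have : ∑ m : Fin l, x ^ m.val = ∑ i ∈ Finset.range l, x ^ i :=
      Fin.sum_univ_eq_sum_range _ _
    rw [this, geom_sum_eq hx1, hxl]
    simp [hdvd]

/-- Summing a function over the multiples of `k` in `Fin (k*l)`. -/
lemma sum_multiples {M : Type*} [AddCommMonoid M] (k l : ℕ) (hk : 0 < k)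
    (g : ℕ → M) :
    ∑ t : Fin (k * l), (if k ∣ t.val then g t.val else 0)
      = ∑ m : Fin l, g (k * m.val) := by
  rw [Fin.sum_univ_eq_sum_range (fun t => if k ∣ t then g t else 0),
    Fin.sum_univ_eq_sum_range (fun m => g (k * m))]
  rw [← Finset.sum_filter]
  have himg : (Finset.range (k * l)).filter (fun t => k ∣ t)
      = (Finset.range l).image (fun m => k * m) := by
    ext n
    simp only [Finset.mem_filter, Finset.mem_range, Finset.mem_image]
    constructor
    · rintro ⟨hn, c, rfl⟩
      exact ⟨c, Nat.lt_of_mul_lt_mul_left hn, rfl⟩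
    · rintro ⟨m, hm, rfl⟩
      exact ⟨mul_lt_mul_of_pos_left hm hk, ⟨m, rfl⟩⟩
  rw [himg, Finset.sum_image (fun a _ b _ h => Nat.eq_of_mul_eq_mul_left hk h)]

/-- The filter of multiples of `k` in `Fin (k*l)` has `l` elements. -/
lemma card_multiples (k l : ℕ) (hk : 0 < k) :
    ((Finset.univ : Finset (Fin (k * l))).filter (fun t => k ∣ t.val)).card = l := by
  classical
  rw [Finset.card_filter]
  rw [sum_multiples k l hk (fun _ => 1)]
  simp

/-- For `N = k·l` and the comb signal supported on multiples of `k`, the DQFT is the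
comb supported on multiples of `l` with value `l/k`; equality holds in the
discrete quaternion uncertainty principle. -/
theorem dqft_comb (k l : ℕ) (hk : 0 < k) (hl : 0 < l) (N : ℕ) (hN : N = k * l)
    (f : Fin N → Fin N → Quaternion ℝ)
    (hf : ∀ (t s : Fin N), f t s = if k ∣ t.val ∧ k ∣ s.val then 1 else 0) :
    (∀ (u v : Fin N),
        dqft N N f u v =
          if l ∣ u.val ∧ l ∣ v.val then (((l : ℝ) / (k : ℝ)) : Quaternion ℝ) else 0) ∧
      (Finset.univ.filter (fun p : Fin N × Fin N => f p.1 p.2 ≠ 0)).card = l ^ 2 ∧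
      (Finset.univ.filter (fun p : Fin N × Fin N => dqft N N f p.1 p.2 ≠ 0)).card = k ^ 2 ∧
      (Finset.univ.filter (fun p : Fin N × Fin N => f p.1 p.2 ≠ 0)).card *
        (Finset.univ.filter (fun p : Fin N × Fin N => dqft N N f p.1 p.2 ≠ 0)).card = N ^ 2 := by
  have hN0 : 0 < N := hN ▸ Nat.mul_pos hk hl
  have hNr : (N : ℝ) ≠ 0 := Nat.cast_ne_zero.mpr hN0.ne'
  have hkr : (k : ℝ) ≠ 0 := Nat.cast_ne_zero.mpr hk.ne'
  have hlr : (l : ℝ) ≠ 0 := Nat.cast_ne_zero.mpr hl.ne'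
  -- the one-dimensional comb sum
  have key : ∀ (φ : ℂ →ₐ[ℝ] Quaternion ℝ) (q : Quaternion ℝ)
      (hq : ∀ θ : ℝ, qexp q θ = φ (Complex.exp (θ * Complex.I))) (u : Fin N),
      (∑ t : Fin N, if k ∣ t.val then qexp q (-(2 * Real.pi * u.val * t.val / N)) else 0)
        = if l ∣ u.val then ((l : ℝ) : Quaternion ℝ) else 0 := by
    intro φ q hq u
    have : (∑ t : Fin N, if k ∣ t.val then qexp q (-(2 * Real.pi * u.val * t.val / N)) else 0)
        = φ (∑ t : Fin N, if k ∣ t.val then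
            Complex.exp ((-(2 * Real.pi * u.val * t.val / N) : ℝ) * Complex.I) else 0) := by
      rw [map_sum]
      refine Finset.sum_congr rfl fun t _ => ?_
      split_ifs
      · exact hq _
      · simp
    rw [this]
    subst hN
    rw [sum_multiples k l hk
      (fun n => Complex.exp ((-(2 * Real.pi * u.val * n / ((k*l : ℕ) : ℝ)) : ℝ) * Complex.I))]
    have hre : ∀ m : Fin l,
        Complex.exp ((-(2 * Real.pi * u.val * ((k * m.val : ℕ) : ℝ) / ((k*l : ℕ) : ℝ)) : ℝ)
            * Complex.I)
          = Complex.exp ((-(2 * Real.pi * u.val * m.val / l) : ℝ) * Complex.I) := by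
      intro m
      have harg : (-(2 * Real.pi * u.val * ((k * m.val : ℕ) : ℝ) / ((k*l : ℕ) : ℝ)) : ℝ)
          = -(2 * Real.pi * u.val * m.val / l) := by
        push_cast
        field_simp
      rw [harg]
    rw [Fintype.sum_congr _ _ hre, complex_root_sum l hl u.val]
    split_ifs
    · have hcast : ((l : ℂ)) = Complex.ofReal (l : ℝ) := by push_cast; ring
      rw [hcast]
      exact φ.commutes (l : ℝ)
    · simp
  -- value of the transform
  have h1 : ∀ (u v : Fin N),
      dqft N N f u v =
        if l ∣ u.val ∧ l ∣ v.val then (((l : ℝ) / (k : ℝ)) : Quaternion ℝ) else 0 := by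
    intro u v
    have hfact : ∀ (t s : Fin N),
        qexp qI (-(2 * Real.pi * u.val * t.val / N)) * f t s *
          qexp qJ (-(2 * Real.pi * v.val * s.val / N))
        = (if k ∣ t.val then qexp qI (-(2 * Real.pi * u.val * t.val / N)) else 0) *
          (if k ∣ s.val then qexp qJ (-(2 * Real.pi * v.val * s.val / N)) else 0) := by
      intro t s
      rw [hf t s]
      by_cases h1 : k ∣ t.val <;> by_cases h2 : k ∣ s.val <;> simp [h1, h2]
    have : dqft N N f u v = ((Real.sqrt (N * N))⁻¹ : ℝ) •
        ((∑ t : Fin N, if k ∣ t.val then qexp qI (-(2 * Real.pi * u.val * t.val / N)) else 0) *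
         (∑ s : Fin N, if k ∣ s.val then qexp qJ (-(2 * Real.pi * v.val * s.val / N)) else 0)) := by
      rw [dqft, Finset.sum_mul_sum]
      congr 1
      exact Finset.sum_congr rfl fun t _ => Finset.sum_congr rfl fun s _ => hfact t s
    rw [this, key phiI qI qexp_qI_eq u, key phiJ qJ qexp_qJ_eq v]
    have hsqrt : Real.sqrt ((N : ℝ) * N) = N := Real.sqrt_mul_self (Nat.cast_nonneg N)
    by_cases hu : l ∣ u.val <;> by_cases hv : l ∣ v.val
    · rw [if_pos hu, if_pos hv, if_pos ⟨hu, hv⟩]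
      rw [← Quaternion.coe_mul, Quaternion.smul_coe]
      rw [← Quaternion.coe_div, Quaternion.coe_inj]
      rw [hsqrt, hN]
      push_cast
      field_simp
    · simp [hu, hv]
    · simp [hu, hv]
    · simp [hu, hv]
  have h2 : (Finset.univ.filter (fun p : Fin N × Fin N => f p.1 p.2 ≠ 0)).card = l ^ 2 := by
    have hstep : (Finset.univ.filter (fun p : Fin N × Fin N => f p.1 p.2 ≠ 0))
        = ((Finset.univ ×ˢ Finset.univ).filter
            (fun p : Fin N × Fin N => k ∣ p.1.val ∧ k ∣ p.2.val)) := by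
      rw [Finset.univ_product_univ]
      refine Finset.filter_congr fun p _ => ?_
      rw [hf p.1 p.2]
      split_ifs with h <;> simp [h]
    have hcard : ((Finset.univ ×ˢ Finset.univ).filter
        (fun p : Fin N × Fin N => k ∣ p.1.val ∧ k ∣ p.2.val)).card
        = (Finset.univ.filter (fun t : Fin N => k ∣ t.val)).card *
          (Finset.univ.filter (fun s : Fin N => k ∣ s.val)).card := by
      rw [← Finset.card_product]
      congr 1
      convert Finset.filter_product (fun t : Fin N => k ∣ t.val)
        (fun s : Fin N => k ∣ s.val) using 2
    rw [hstep, hcard]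
    subst hN
    rw [card_multiples k l hk, sq]
  have h3 : (Finset.univ.filter (fun p : Fin N × Fin N => dqft N N f p.1 p.2 ≠ 0)).card
      = k ^ 2 := by
    have hlkne : (((l : ℝ) / (k : ℝ)) : Quaternion ℝ) ≠ 0 := by
      intro h0
      have : ((l : ℝ) / (k : ℝ)) = 0 := Quaternion.coe_injective (by simpa using h0)
      exact hlr (by field_simp at this; exact_mod_cast this)
    have hstep : (Finset.univ.filter (fun p : Fin N × Fin N => dqft N N f p.1 p.2 ≠ 0))
        = ((Finset.univ ×ˢ Finset.univ).filter
            (fun p : Fin N × Fin N => l ∣ p.1.val ∧ l ∣ p.2.val)) := by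
      rw [Finset.univ_product_univ]
      refine Finset.filter_congr fun p _ => ?_
      rw [h1 p.1 p.2]
      split_ifs with h <;> simp [h, hlkne]
    have hcard : ((Finset.univ ×ˢ Finset.univ).filter
        (fun p : Fin N × Fin N => l ∣ p.1.val ∧ l ∣ p.2.val)).card
        = (Finset.univ.filter (fun u : Fin N => l ∣ u.val)).card *
          (Finset.univ.filter (fun v : Fin N => l ∣ v.val)).card := by
      rw [← Finset.card_product]
      congr 1
      convert Finset.filter_product (fun u : Fin N => l ∣ u.val)
        (fun v : Fin N => l ∣ v.val) using 2
    rw [hstep, hcard]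
    have hN' : N = l * k := by rw [hN, mul_comm]
    subst hN'
    rw [card_multiples l k hl, sq]
  refine ⟨h1, h2, h3, ?_⟩
  rw [h2, h3, hN]
  ring
end
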